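/- arXiv:2001.08190 — 5 statements merged into one kernel-verified Lean document; each statement's English description precedes it below -/
import Mathlib

section
/- For a class C of finite structures over a finite relational signature τ, if C is closed under isomorphism, inverse homomorphisms, and disjoint unions, and C is nonempty, then there exists a countable τ-structure B such that C is exactly the class of finite τ-structures admitting a homomorphism to B. -/
structure Sig : Type 1 where
  symb : Type
  ar : symb → ℕ

structure Str (σ : Sig) : Type 1 where
  dom : Type
  rel : ∀ s : σ.symb, Set ((Fin (σ.ar s)) → dom)

def IsHom {σ : Sig} (A B : Str σ) (h : A.dom → B.dom) : Prop :=
  ∀ s t, t ∈ A.rel s → (h ∘ t) ∈ B.rel s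

def HomTo {σ : Sig} (A B : Str σ) : Prop := ∃ h, IsHom A B h

def IsEmb {σ : Sig} (A B : Str σ) (h : A.dom → B.dom) : Prop :=
  Function.Injective h ∧ ∀ s t, t ∈ A.rel s ↔ (h ∘ t) ∈ B.rel s

def EmbTo {σ : Sig} (A B : Str σ) : Prop := ∃ h, IsEmb A B h

def IsoTo {σ : Sig} (A B : Str σ) : Prop := ∃ h, IsEmb A B h ∧ Function.Surjective h

def disjUnion {σ : Sig} (A B : Str σ) : Str σ where
  dom := A.dom ⊕ B.dom
  rel := fun s => {t | (∃ u ∈ A.rel s, t = Sum.inl ∘ u) ∨ (∃ u ∈ B.rel s, t = Sum.inr ∘ u)}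

/-!
The target `B` is the disjoint union of one copy of every structure in `C` whose domain is some
`Fin n`; there are countably many such structures because the signature is finite. Every finite
`A ∈ C` is isomorphic to one of them, which lies in `C` because it maps to `A`; so `A` maps to
`B`. Conversely, a homomorphism from a finite `A` to `B` meets only finitely many components, and
these all map to a single member of `C`, namely their disjoint union; closure under inverse
homomorphisms then puts `A` in `C`.
-/

section

variable {σ : Sig}

theorem IsHom.comp {A B D : Str σ} {g : B.dom → D.dom} {f : A.dom → B.dom}
    (hg : IsHom B D g) (hf : IsHom A B f) : IsHom A D (g ∘ f) :=
  fun s t ht => hg s (f ∘ t) (hf s t ht)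

theorem HomTo.trans {A B D : Str σ} (hAB : HomTo A B) (hBD : HomTo B D) : HomTo A D :=
  let ⟨f, hf⟩ := hAB
  let ⟨g, hg⟩ := hBD
  ⟨g ∘ f, hg.comp hf⟩

theorem homTo_disjUnion_left (A B : Str σ) : HomTo A (disjUnion A B) :=
  ⟨Sum.inl, fun _ t ht => Or.inl ⟨t, ht, rfl⟩⟩

theorem homTo_disjUnion_right (A B : Str σ) : HomTo B (disjUnion A B) :=
  ⟨Sum.inr, fun _ t ht => Or.inr ⟨t, ht, rfl⟩⟩

namespace Str

def transport (A : Str σ) {β : Type} (e : A.dom ≃ β) : Str σ where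
  dom := β
  rel s := {t | e.symm ∘ t ∈ A.rel s}

theorem isHom_transport (A : Str σ) {β : Type} (e : A.dom ≃ β) :
    IsHom A (A.transport e) e := by
  intro s t ht
  change e.symm ∘ e ∘ t ∈ A.rel s
  rwa [← Function.comp_assoc, e.symm_comp_self, Function.id_comp]

theorem isHom_transport_symm (A : Str σ) {β : Type} (e : A.dom ≃ β) :
    IsHom (A.transport e) A e.symm :=
  fun _ _ ht => ht

def sigma {ι : Type} (F : ι → Str σ) : Str σ where
  dom := Σ i, (F i).dom
  rel s := {t | ∃ i, ∃ u ∈ (F i).rel s, t = fun x => ⟨i, u x⟩}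

theorem isHom_sigma_mk {ι : Type} (F : ι → Str σ) (i : ι) :
    IsHom (F i) (sigma F) (Sigma.mk (β := fun i => (F i).dom) i) :=
  fun _ u hu => ⟨i, u, hu, rfl⟩

theorem isHom_sigma_elim {ι : Type} {F : ι → Str σ} {D : Str σ}
    {g : ∀ i, (F i).dom → D.dom} (hg : ∀ i, IsHom (F i) D (g i)) :
    IsHom (sigma F) D (fun p => g p.1 p.2) := by
  rintro s _ ⟨i, u, hu, rfl⟩
  exact hg i s u hu

theorem exists_finite_homTo_sigma {ι : Type} {F : ι → Str σ} {A : Str σ}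
    [Finite σ.symb] [Finite A.dom] (hA : HomTo A (sigma F)) :
    ∃ S : Set ι, S.Finite ∧ HomTo A (sigma fun i : S => F i) := by
  obtain ⟨h, hh⟩ := hA
  let Tuple := {st : Σ s : σ.symb, Fin (σ.ar s) → A.dom // st.2 ∈ A.rel st.1}
  choose comp u hu hhu using fun q : Tuple => hh q.1.1 q.1.2 q.2
  -- components are recorded for the tuples as well as the points: a nullary tuple meets no point
  let S := Set.range (fun a => (h a).1) ∪ Set.range comp
  refine ⟨S, (Set.finite_range _).union (Set.finite_range _),
    fun a => ⟨⟨(h a).1, Or.inl ⟨a, rfl⟩⟩, (h a).2⟩, fun s t ht => ?_⟩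
  let q : Tuple := ⟨⟨s, t⟩, ht⟩
  refine ⟨⟨comp q, Or.inr ⟨q, rfl⟩⟩, u q, hu q, funext fun x => ?_⟩
  have hx : h (t x) = ⟨comp q, u q x⟩ := congrFun (hhu q) x
  change (⟨⟨(h (t x)).1, _⟩, (h (t x)).2⟩ : Σ i : S, (F i).dom) = _
  generalize h (t x) = b, (Or.inl ⟨t x, rfl⟩ : (h (t x)).1 ∈ S) = hb at hx ⊢
  subst hx
  rfl

end Str

section Closure

variable {C : Set (Str σ)}

theorem exists_mem_forall_homTo_of_finite {ι : Type} {F : ι → Str σ}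
    (hdu : ∀ A B : Str σ, A ∈ C → B ∈ C → disjUnion A B ∈ C) (hne : C.Nonempty)
    {S : Set ι} (hS : S.Finite) (hF : ∀ i ∈ S, F i ∈ C) :
    ∃ D ∈ C, ∀ i ∈ S, HomTo (F i) D := by
  induction S, hS using Set.Finite.induction_on with
  | empty => exact ⟨hne.some, hne.some_mem, fun _ hi => hi.elim⟩
  | @insert j S _ _ ih =>
    obtain ⟨D, hD, hSD⟩ := ih fun i hi => hF i (Set.mem_insert_of_mem j hi)
    refine ⟨disjUnion (F j) D, hdu _ _ (hF j (Set.mem_insert j S)) hD, ?_⟩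
    rintro i (rfl | hi)
    · exact homTo_disjUnion_left _ _
    · exact (hSD i hi).trans (homTo_disjUnion_right _ _)

theorem mem_of_homTo_sigma [Finite σ.symb] {ι : Type} {F : ι → Str σ} (hF : ∀ i, F i ∈ C)
    (hinv : ∀ A B : Str σ, B ∈ C → Finite A.dom → HomTo A B → A ∈ C)
    (hdu : ∀ A B : Str σ, A ∈ C → B ∈ C → disjUnion A B ∈ C) (hne : C.Nonempty)
    {A : Str σ} [Finite A.dom] (hA : HomTo A (Str.sigma F)) : A ∈ C := by
  obtain ⟨S, hS, hAS⟩ := Str.exists_finite_homTo_sigma hA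
  obtain ⟨D, hD, hSD⟩ := exists_mem_forall_homTo_of_finite hdu hne hS fun i _ => hF i
  choose g hg using fun i : S => hSD i i.2
  exact hinv A D hD inferInstance (hAS.trans ⟨_, Str.isHom_sigma_elim hg⟩)

end Closure

abbrev FinStr (σ : Sig) (n : ℕ) := ∀ s : σ.symb, Set (Fin (σ.ar s) → Fin n)

def FinStr.toStr {n : ℕ} (r : FinStr σ n) : Str σ := ⟨Fin n, r⟩

abbrev FinStrIn (C : Set (Str σ)) := {p : Σ n, FinStr σ n // p.2.toStr ∈ C}

def finUnion (C : Set (Str σ)) : Str σ :=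
  Str.sigma fun i : FinStrIn C => i.1.2.toStr

instance [Finite σ.symb] (C : Set (Str σ)) : Countable (finUnion C).dom :=
  inferInstanceAs (Countable (Σ i : FinStrIn C, Fin i.1.1))

theorem homTo_finUnion {C : Set (Str σ)}
    (hinv : ∀ A B : Str σ, B ∈ C → Finite A.dom → HomTo A B → A ∈ C)
    {A : Str σ} [Finite A.dom] (hAC : A ∈ C) : HomTo A (finUnion C) := by
  obtain ⟨n, ⟨e⟩⟩ := Finite.exists_equiv_fin A.dom
  let r : FinStr σ n := (A.transport e).rel
  have hr : r.toStr ∈ C := hinv _ A hAC (Finite.of_fintype (Fin n)) ⟨_, A.isHom_transport_symm e⟩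
  have hAr : IsHom A r.toStr e := A.isHom_transport e
  exact ⟨_, (Str.isHom_sigma_mk _ (⟨⟨n, r⟩, hr⟩ : FinStrIn C)).comp hAr⟩

end

theorem stmt0_general (σ : Sig) (hfs : Finite σ.symb) (C : Set (Str σ))
    (hinv : ∀ A B : Str σ, B ∈ C → Finite A.dom → HomTo A B → A ∈ C)
    (hdu : ∀ A B : Str σ, A ∈ C → B ∈ C → disjUnion A B ∈ C)
    (hne : C.Nonempty) :
    ∃ B : Str σ, Countable B.dom ∧
      ∀ A : Str σ, Finite A.dom → (A ∈ C ↔ HomTo A B) :=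
  ⟨finUnion C, inferInstance, fun _ _ =>
    ⟨homTo_finUnion hinv, mem_of_homTo_sigma (fun i => i.2) hinv hdu hne⟩⟩

theorem stmt0 (σ : Sig) (hfs : Finite σ.symb) (C : Set (Str σ))
    (hfin : ∀ A ∈ C, Finite A.dom)
    (hiso : ∀ A B : Str σ, A ∈ C → IsoTo A B → B ∈ C)
    (hinv : ∀ A B : Str σ, B ∈ C → Finite A.dom → HomTo A B → A ∈ C)
    (hdu : ∀ A B : Str σ, A ∈ C → B ∈ C → disjUnion A B ∈ C)
    (hne : C.Nonempty) :
    ∃ B : Str σ, Countable B.dom ∧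
      ∀ A : Str σ, Finite A.dom → (A ∈ C ↔ HomTo A B) :=
  stmt0_general σ hfs C hinv hdu hne
end

section
/- Every disconnected clause of a guarded SNP sentence splits: if ψ is a clause (disjunction of literals) over variables partitioned into nonempty sets X₁ and X₂ such that every negative literal has all its variables in X₁ or all in X₂, and every positive literal is guarded (its variable set is contained in the variable set of some negative literal of ψ), then ψ can be written as ψ₁(x̄) ∨ ψ₂(ȳ) where ψ₁ only uses variables from X₁ and ψ₂ only uses variables from X₂. -/
theorem stmt10 (Var Lit : Type) (vars : Lit → Set Var) (isNeg : Lit → Bool)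
    (ψ : Set Lit) (X₁ X₂ : Set Var)
    (hne₁ : X₁.Nonempty) (hne₂ : X₂.Nonempty) (hdisj : Disjoint X₁ X₂)
    (hpart : ∀ l ∈ ψ, vars l ⊆ X₁ ∪ X₂)
    (hneg : ∀ l ∈ ψ, isNeg l = true → vars l ⊆ X₁ ∨ vars l ⊆ X₂)
    (hguard : ∀ l ∈ ψ, isNeg l = false → ∃ l' ∈ ψ, isNeg l' = true ∧ vars l ⊆ vars l') :
    ∃ ψ₁ ψ₂ : Set Lit, ψ = ψ₁ ∪ ψ₂ ∧
      (∀ l ∈ ψ₁, vars l ⊆ X₁) ∧ (∀ l ∈ ψ₂, vars l ⊆ X₂) := by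
  refine ⟨{l ∈ ψ | vars l ⊆ X₁}, {l ∈ ψ | vars l ⊆ X₂}, ?_, fun l hl => hl.2,
    fun l hl => hl.2⟩
  ext l
  constructor
  · intro hl
    have : vars l ⊆ X₁ ∨ vars l ⊆ X₂ := by
      cases h : isNeg l with
      | true => exact hneg l hl h
      | false =>
        obtain ⟨l', hl', hneg', hsub⟩ := hguard l hl h
        rcases hneg l' hl' hneg' with h1 | h2
        · exact Or.inl (hsub.trans h1)
        · exact Or.inr (hsub.trans h2)
    rcases this with h | h
    · exact Or.inl ⟨hl, h⟩
    · exact Or.inr ⟨hl, h⟩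
  · rintro (⟨h, _⟩ | ⟨h, _⟩) <;> exact h
end

section
/- If every clause of a quantifier-free formula φ over τ ∪ ρ contains only negative τ-literals, then the class of finite τ-structures A such that some ρ-expansion of A satisfies ∀x̄ φ is closed under inverse homomorphisms: if B is in the class and A → B, then A is in the class. -/
def Sig.sum (τ ρ : Sig) : Sig := ⟨τ.symb ⊕ ρ.symb, Sum.elim τ.ar ρ.ar⟩

def expand {τ ρ : Sig} (A : Str τ) (I : ∀ s : ρ.symb, Set ((Fin (ρ.ar s)) → A.dom)) :
    Str (Sig.sum τ ρ) where
  dom := A.dom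
  rel := fun s => match s with
    | Sum.inl s => A.rel s
    | Sum.inr s => I s

structure Atom (σ : Sig) (n : ℕ) where
  sym : σ.symb
  args : Fin (σ.ar sym) → Fin n

structure Lit (σ : Sig) (n : ℕ) where
  atom : Atom σ n
  pos : Bool

abbrev Clause (σ : Sig) (n : ℕ) := List (Lit σ n)

abbrev CNF (σ : Sig) (n : ℕ) := List (Clause σ n)

def Atom.eval {σ : Sig} {n : ℕ} (a : Atom σ n) (A : Str σ) (v : Fin n → A.dom) : Prop :=
  (fun i => v (a.args i)) ∈ A.rel a.sym

def Lit.eval {σ : Sig} {n : ℕ} (l : Lit σ n) (A : Str σ) (v : Fin n → A.dom) : Prop :=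
  if l.pos then l.atom.eval A v else ¬ l.atom.eval A v

def Clause.sat {σ : Sig} {n : ℕ} (c : Clause σ n) (A : Str σ) (v : Fin n → A.dom) : Prop :=
  ∃ l ∈ c, l.eval A v

def CNF.models {σ : Sig} {n : ℕ} (φ : CNF σ n) (A : Str σ) : Prop :=
  ∀ (v : Fin n → A.dom), ∀ c ∈ φ, c.sat A v

def Lit.vars {σ : Sig} {n : ℕ} (l : Lit σ n) : Set (Fin n) := Set.range l.atom.args

def Clause.vars {σ : Sig} {n : ℕ} (c : Clause σ n) : Set (Fin n) :=
  {x | ∃ l ∈ c, x ∈ l.vars}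

def Clause.Connected {σ : Sig} {n : ℕ} (c : Clause σ n) : Prop :=
  ∀ X₁ X₂ : Set (Fin n), X₁ ∪ X₂ = c.vars → Disjoint X₁ X₂ →
    X₁.Nonempty → X₂.Nonempty →
    ∃ l ∈ c, l.pos = false ∧ (∃ x ∈ l.vars, x ∈ X₁) ∧ (∃ x ∈ l.vars, x ∈ X₂)

/-! Pull the ρ-relations of the expansion of `B` back along `h`. Then `h` is a homomorphism of the
expansions that also reflects every ρ-relation, and a universal CNF is transferred backwards along
such a map as soon as each of its positive literals is about a reflected symbol: a positive literal
true at `h ∘ v` is true at `v` by reflection, a negative one by preservation. -/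

section Transfer

variable {σ : Sig} {n : ℕ} {M N : Str σ} {h : M.dom → N.dom}

theorem Atom.eval_comp_of_isHom (hh : IsHom M N h) (a : Atom σ n) {v : Fin n → M.dom}
    (ha : a.eval M v) : a.eval N (h ∘ v) :=
  hh a.sym _ ha

theorem Lit.eval_of_eval_comp (hh : IsHom M N h) {Q : σ.symb → Prop}
    (hrefl : ∀ s, ¬ Q s → ∀ t, h ∘ t ∈ N.rel s → t ∈ M.rel s)
    {l : Lit σ n} (hl : Q l.atom.sym → l.pos = false) {v : Fin n → M.dom}
    (hlv : l.eval N (h ∘ v)) : l.eval M v := by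
  unfold Lit.eval at hlv ⊢
  cases hpos : l.pos
  · simp only [hpos, Bool.false_eq_true, if_false] at hlv ⊢
    exact fun ha => hlv (Atom.eval_comp_of_isHom hh _ ha)
  · simp only [hpos, if_true] at hlv ⊢
    exact hrefl _ (by simpa [hpos] using hl) _ hlv

theorem CNF.models_of_models_of_isHom (hh : IsHom M N h) {Q : σ.symb → Prop}
    (hrefl : ∀ s, ¬ Q s → ∀ t, h ∘ t ∈ N.rel s → t ∈ M.rel s)
    {φ : CNF σ n} (hφ : ∀ c ∈ φ, ∀ l ∈ c, Q l.atom.sym → l.pos = false)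
    (hN : φ.models N) : φ.models M := by
  intro v c hc
  obtain ⟨l, hl, hlv⟩ := hN (h ∘ v) c hc
  exact ⟨l, hl, Lit.eval_of_eval_comp hh hrefl (hφ c hc l hl) hlv⟩

end Transfer

section Pullback

variable {τ ρ : Sig} {A B : Str τ}

def pullbackInterp (h : A.dom → B.dom) (I : ∀ s : ρ.symb, Set (Fin (ρ.ar s) → B.dom)) :
    ∀ s : ρ.symb, Set (Fin (ρ.ar s) → A.dom) :=
  fun s => (h ∘ ·) ⁻¹' I s

theorem IsHom.expand_pullbackInterp {h : A.dom → B.dom} (hh : IsHom A B h)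
    (I : ∀ s : ρ.symb, Set (Fin (ρ.ar s) → B.dom)) :
    IsHom (expand A (pullbackInterp h I)) (expand B I) h
  | .inl s, _, ht => hh s _ ht
  | .inr _, _, ht => ht

theorem expand_pullbackInterp_reflects (h : A.dom → B.dom)
    (I : ∀ s : ρ.symb, Set (Fin (ρ.ar s) → B.dom)) :
    ∀ s : (Sig.sum τ ρ).symb, ¬ s.isLeft → ∀ t,
      h ∘ t ∈ (expand B I).rel s → t ∈ (expand A (pullbackInterp h I)).rel s
  | .inr _, _, _, ht => ht

end Pullback

theorem stmt12 (τ ρ : Sig) (n : ℕ) (φ : CNF (Sig.sum τ ρ) n)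
    (hmono : ∀ c ∈ φ, ∀ l ∈ c, l.atom.sym.isLeft → l.pos = false)
    (A B : Str τ) (h : A.dom → B.dom) (hh : IsHom A B h)
    (hBe : ∃ I, CNF.models φ (expand B I)) :
    ∃ I, CNF.models φ (expand A I) := by
  obtain ⟨I, hI⟩ := hBe
  exact ⟨pullbackInterp h I, CNF.models_of_models_of_isHom (hh.expand_pullbackInterp I)
    (expand_pullbackInterp_reflects h I) hmono hI⟩
end

section
/- Digraph acyclicity is not expressible in guarded monotone SNP: for every GMSNP sentence Φ over the signature {<} that is true on all finite directed paths, there exists a finite directed cycle that also satisfies Φ. -/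
abbrev DSig : Sig := ⟨Unit, fun _ => 2⟩

def pathG (N : ℕ) : Str DSig where
  dom := Fin (N + 1)
  rel := fun _ => {t | (t 0).val + 1 = (t 1).val}

def cycleG (m : ℕ) : Str DSig where
  dom := Fin (m + 1)
  rel := fun _ => {t | t 1 = t 0 + 1}

/-!
Cut a long path expansion into windows of width `W = 2n + 1`; by pigeonhole, two of them, at
distance `M`, carry the same relations on the symbols of `φ`. Close the segment between them into
the cycle of length `M`: a tuple of the cycle is related iff some lift of it of diameter at most
one is related in the path. Given an assignment into the cycle, some vertex `g ≤ 2n` has no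
variable on its predecessor, so cutting the cycle in front of `g` and unrolling gives an
assignment into the path, where every clause holds. A body atom true in the cycle has a related
lift that differs from the unrolled atom by `0` or `± M`, and the agreeing windows carry the
relation across; a head atom true in the path is short because its guard is, so it holds in the
cycle.
-/

open Fin.NatCast

theorem CNF.models_of_transfer {σ : Sig} {n : ℕ} {φ : CNF σ n}
    (hguard : ∀ c ∈ φ, ∀ l ∈ c, l.pos = true →
      ∃ l' ∈ c, l'.pos = false ∧ Lit.vars l ⊆ Lit.vars l')
    {B C : Str σ} (hB : φ.models B)
    (htransfer : ∀ v : Fin n → C.dom, ∃ w : Fin n → B.dom, ∀ c ∈ φ, ∀ l ∈ c,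
      (l.atom.eval C v → l.atom.eval B w) ∧
      ∀ l' ∈ c, l.vars ⊆ l'.vars → l'.atom.eval C v → l.atom.eval B w → l.atom.eval C v) :
    φ.models C := by
  intro v c hc
  obtain ⟨w, hw⟩ := htransfer v
  obtain ⟨l, hl, hlB⟩ := hB w c hc
  cases hpos : l.pos with
  | false =>
    simp only [Lit.eval, hpos, Bool.false_eq_true, if_false] at hlB
    refine ⟨l, hl, ?_⟩
    simpa only [Lit.eval, hpos, Bool.false_eq_true, if_false] using mt (hw c hc l hl).1 hlB
  | true =>
    simp only [Lit.eval, hpos, if_true] at hlB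
    obtain ⟨l', hl', hneg, hsub⟩ := hguard c hc l hl hpos
    by_cases hl'C : l'.atom.eval C v
    · exact ⟨l, hl, by simpa only [Lit.eval, hpos, if_true] using
        (hw c hc l hl).2 l' hl' hsub hl'C hlB⟩
    · exact ⟨l', hl', by simpa only [Lit.eval, hneg, Bool.false_eq_true, if_false] using hl'C⟩

theorem eq_of_natCast_fin_eq {m a b : ℕ} (h : (a : Fin (m + 1)) = b)
    (hab : a < b + (m + 1)) (hba : b < a + (m + 1)) : a = b := by
  have hmod : a ≡ b [MOD m + 1] := by
    simpa only [Fin.val_natCast, Nat.ModEq] using congrArg Fin.val h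
  rcases le_total a b with hle | hle
  · have := Nat.eq_zero_of_dvd_of_lt ((Nat.modEq_iff_dvd' hle).mp hmod) (by omega)
    omega
  · have := Nat.eq_zero_of_dvd_of_lt ((Nat.modEq_iff_dvd' hle).mp hmod.symm) (by omega)
    omega

theorem eq_or_eq_add_of_natCast_fin_eq {m a b : ℕ} (h : (a : Fin (m + 1)) = b)
    (ha : a < 2 * (m + 1)) (hb : b < 2 * (m + 1)) :
    a = b ∨ a = b + (m + 1) ∨ b = a + (m + 1) := by
  have hself : ∀ x : ℕ, ((x + (m + 1) : ℕ) : Fin (m + 1)) = x := by simp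
  by_cases hba : b + (m + 1) ≤ a
  · exact Or.inr (Or.inl (eq_of_natCast_fin_eq (h.trans (hself b).symm) (by omega) (by omega)))
  by_cases hab : a + (m + 1) ≤ b
  · exact Or.inr (Or.inr (eq_of_natCast_fin_eq ((hself a).trans h).symm (by omega) (by omega)))
  exact Or.inl (eq_of_natCast_fin_eq h (by omega) (by omega))

/-- Cutting the cycle `Fin (m + 1)` at `g`, the vertex `c` becomes the point
`unroll m g c ∈ [g, g + m + 1)` of the line. -/
def unroll (m g : ℕ) (c : Fin (m + 1)) : ℕ := g + (c - g).val

section Unroll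

variable {m g : ℕ}

theorem le_unroll (c : Fin (m + 1)) : g ≤ unroll m g c := Nat.le_add_right _ _

theorem unroll_lt (c : Fin (m + 1)) : unroll m g c < g + (m + 1) :=
  Nat.add_lt_add_left (c - g).isLt g

@[simp]
theorem natCast_unroll (c : Fin (m + 1)) : ((unroll m g c : ℕ) : Fin (m + 1)) = c := by
  simp [unroll]

theorem eq_unroll {y : ℕ} {c : Fin (m + 1)} (hy : (y : Fin (m + 1)) = c) (hgy : g ≤ y)
    (hyg : y < g + (m + 1)) : y = unroll m g c := by
  have := le_unroll (g := g) c
  have := unroll_lt (g := g) c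
  exact eq_of_natCast_fin_eq (hy.trans (natCast_unroll c).symm) (by omega) (by omega)

theorem unroll_add_eq {A u u' : ℕ} {c c' : Fin (m + 1)} (hu : (u : Fin (m + 1)) = c)
    (hu' : (u' : Fin (m + 1)) = c') (hle : u ≤ u') (hlt : u' < u + A)
    (hgap : unroll m g c + A ≤ g + (m + 1)) :
    unroll m g c' + u = u' + unroll m g c := by
  have hshift : unroll m g c + (u' - u) = unroll m g c' := by
    refine eq_unroll ?_ ((le_unroll c).trans (Nat.le_add_right _ _)) (by omega)
    rw [Nat.cast_add, natCast_unroll, ← hu, ← hu', ← Nat.cast_add, Nat.add_sub_cancel' hle]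
  omega

theorem exists_unroll_gap {n A : ℕ} (hn : A * n < m + 1) (v : Fin n → Fin (m + 1)) :
    ∃ g ≤ A * n, ∀ x, unroll m g (v x) + A ≤ g + (m + 1) := by
  by_contra! hblocked
  have : ∀ g : Fin (A * n + 1), ∃ x, (g : ℕ) + (m + 1) < unroll m g (v x) + A :=
    fun g => hblocked g (by omega)
  choose X hX using this
  -- a blocked cut `g` is recovered from the variable `X g` and the position of `g` next to it
  let F : Fin (A * n + 1) → Fin n × Fin A := fun g =>
    (X g, ⟨(v (X g) - g).val + A - (m + 1), by
      have := hX g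
      simp only [unroll] at this
      omega⟩)
  have hF : Function.Injective F := by
    intro g₁ g₂ h
    simp only [F, Prod.mk.injEq, Fin.mk.injEq] at h
    obtain ⟨hX₁₂, hpos⟩ := h
    have h₁ := hX g₁
    have h₂ := hX g₂
    simp only [unroll] at h₁ h₂
    rw [← hX₁₂] at h₂ hpos
    have hsub : v (X g₁) - g₁ = v (X g₁) - g₂ := Fin.ext (by omega)
    exact Fin.ext (eq_of_natCast_fin_eq (sub_right_injective hsub) (by omega) (by omega))
  have := Fintype.card_le_of_injective F hF
  simp only [Fintype.card_fin, Fintype.card_prod] at this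
  nlinarith

end Unroll

def Clustered (A : ℕ) {r : ℕ} (u : Fin r → ℕ) : Prop := ∀ i j, u i < u j + A

theorem Clustered.of_translate {A r : ℕ} {u w : Fin r → ℕ} (hu : Clustered A u)
    (htr : ∀ i j, w i + u j = u i + w j) : Clustered A w := fun i j => by
  have := hu i j
  have := htr i j
  omega

theorem Clustered.comp_of_range_subset {A n r r' : ℕ} {h : Fin n → ℕ} {a : Fin r → Fin n}
    {a' : Fin r' → Fin n} (hcl : Clustered A (h ∘ a')) (hsub : Set.range a ⊆ Set.range a') :
    Clustered A (h ∘ a) := fun i j => by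
  obtain ⟨i', hi'⟩ := hsub ⟨i, rfl⟩
  obtain ⟨j', hj'⟩ := hsub ⟨j, rfl⟩
  simpa only [Function.comp, hi', hj'] using hcl i' j'

theorem unroll_translate {m g A r : ℕ} {t : Fin r → Fin (m + 1)} {u : Fin r → ℕ}
    (hu : ∀ k, (u k : Fin (m + 1)) = t k) (hcl : Clustered A u)
    (hgap : ∀ k, unroll m g (t k) + A ≤ g + (m + 1)) (i j : Fin r) :
    unroll m g (t i) + u j = u i + unroll m g (t j) := by
  rcases le_total (u i) (u j) with h | h
  · have := unroll_add_eq (hu i) (hu j) h (hcl j i) (hgap i)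
    omega
  · have := unroll_add_eq (hu j) (hu i) h (hcl i j) (hgap j)
    omega

theorem mem_iff_of_translate {X : Type*} {r m W : ℕ} (hWm : W ≤ m + 1) (f : ℕ → X)
    {R : Set (Fin r → X)}
    (hper : ∀ u : Fin r → ℕ, (∀ k, u k < W) →
      ((fun k => f (u k)) ∈ R ↔ (fun k => f (u k + (m + 1))) ∈ R))
    {u w : Fin r → ℕ} (hu : ∀ k, u k < m + 1 + W) (hw : ∀ k, w k < m + 1 + W)
    (hcast : ∀ k, (u k : Fin (m + 1)) = w k) (htr : ∀ i j, w i + u j = u i + w j) :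
    f ∘ u ∈ R ↔ f ∘ w ∈ R := by
  rcases isEmpty_or_nonempty (Fin r) with hr | ⟨⟨k₀⟩⟩
  · rw [Subsingleton.elim u w]
  rcases eq_or_eq_add_of_natCast_fin_eq (hcast k₀) (by grind) (by grind) with h | h | h
  · rw [show u = w from funext fun k => by grind]
  · rw [show u = fun k => w k + (m + 1) from funext fun k => by grind]
    exact (hper w fun k => by grind).symm
  · rw [show w = fun k => u k + (m + 1) from funext fun k => by grind]
    exact hper u fun k => by grind

/-- The path `f` closed up into a cycle of length `m + 1`. Only tuples with a short lift are
kept: guarded heads never need others, and short tuples are not torn apart by a cut. -/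
def Str.fold {σ : Sig} (B : Str σ) (f : ℕ → B.dom) (m A W : ℕ) : Str σ where
  dom := Fin (m + 1)
  rel s := {t | ∃ u : Fin (σ.ar s) → ℕ, (∀ k, (u k : Fin (m + 1)) = t k) ∧
    (∀ k, u k < m + 1 + W) ∧ Clustered A u ∧ f ∘ u ∈ B.rel s}

theorem CNF.models_fold {σ : Sig} {n : ℕ} {φ : CNF σ n}
    (hguard : ∀ c ∈ φ, ∀ l ∈ c, l.pos = true →
      ∃ l' ∈ c, l'.pos = false ∧ Lit.vars l ⊆ Lit.vars l')
    {B : Str σ} (hB : φ.models B) (f : ℕ → B.dom) {m A W : ℕ} (hAW : A * n < W)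
    (hWm : W ≤ m + 1)
    (hper : ∀ c ∈ φ, ∀ l ∈ c, ∀ u : Fin (σ.ar l.atom.sym) → ℕ, (∀ k, u k < W) →
      ((fun k => f (u k)) ∈ B.rel l.atom.sym ↔
        (fun k => f (u k + (m + 1))) ∈ B.rel l.atom.sym)) :
    φ.models (B.fold f m A W) := by
  refine CNF.models_of_transfer hguard hB fun v => ?_
  obtain ⟨g, hgW, hgap⟩ := exists_unroll_gap (by omega : A * n < m + 1) v
  have hlt : ∀ x, unroll m g (v x) < m + 1 + W := fun x => by
    have := unroll_lt (g := g) (v x)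
    omega
  refine ⟨fun x => f (unroll m g (v x)), fun c hc l hl => ⟨?_, fun l' _ hsub hl' hlB => ?_⟩⟩
  · rintro ⟨u, hu, hub, hcl, hmem⟩
    exact (mem_iff_of_translate hWm f (hper c hc l hl) hub (fun k => hlt _)
      (fun k => (hu k).trans (natCast_unroll _).symm)
      (unroll_translate hu hcl fun k => hgap _)).mp hmem
  · obtain ⟨u', hu', -, hcl', -⟩ := hl'
    exact ⟨fun k => unroll m g (v (l.atom.args k)), fun k => natCast_unroll _, fun k => hlt _,
      Clustered.comp_of_range_subset (h := fun x => unroll m g (v x))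
        (hcl'.of_translate (unroll_translate hu' hcl' fun k => hgap _)) hsub,
      hlB⟩

theorem Str.fold_rel_inl {ρ : Sig} {B : Str (Sig.sum DSig ρ)} (f : ℕ → B.dom) {m A W : ℕ}
    (hA : 2 ≤ A) (hW : 0 < W)
    (hsucc : ∀ u : Fin 2 → ℕ, (∀ k, u k < m + 1 + W) →
      ((fun k => f (u k)) ∈ B.rel (Sum.inl ()) ↔ u 1 = u 0 + 1)) :
    (B.fold f m A W).rel (Sum.inl ()) = (cycleG m).rel () := by
  ext (t : Fin 2 → Fin (m + 1))
  change (∃ u : Fin 2 → ℕ, (∀ k, (u k : Fin (m + 1)) = t k) ∧ (∀ k, u k < m + 1 + W) ∧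
    Clustered A u ∧ (fun k => f (u k)) ∈ B.rel (Sum.inl ())) ↔ t 1 = t 0 + 1
  constructor
  · rintro ⟨u, hu, hub, -, hmem⟩
    rw [← hu, ← hu, (hsucc u hub).mp hmem, Nat.cast_succ]
  · intro ht
    have := (t 0).isLt
    refine ⟨![(t 0).val, (t 0).val + 1], fun k => ?_, fun k => ?_, fun i j => ?_, ?_⟩
    · fin_cases k <;> simp [ht]
    · fin_cases k <;> simp <;> omega
    · fin_cases i <;> fin_cases j <;> simp <;> omega
    · exact (hsucc _ fun k => by fin_cases k <;> simp <;> omega).mpr (by simp)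

theorem expand_cycleG_eq_fold {ρ : Sig} {B : Str (Sig.sum DSig ρ)} (f : ℕ → B.dom) {m A W : ℕ}
    (hA : 2 ≤ A) (hW : 0 < W)
    (hsucc : ∀ u : Fin 2 → ℕ, (∀ k, u k < m + 1 + W) →
      ((fun k => f (u k)) ∈ B.rel (Sum.inl ()) ↔ u 1 = u 0 + 1)) :
    expand (cycleG m) (fun s => (B.fold f m A W).rel (Sum.inr s)) = B.fold f m A W := by
  change Str.mk _ _ = Str.mk _ _
  congr 1
  funext s
  rcases s with ⟨⟩ | s
  · exact (Str.fold_rel_inl f hA hW hsucc).symm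
  · rfl

theorem clamp_mem_pathG_iff {ρ : Sig} {N p : ℕ}
    (I : ∀ s : ρ.symb, Set (Fin (ρ.ar s) → Fin (N + 1))) (u : Fin 2 → ℕ) (hu : ∀ k, p + u k ≤ N) :
    (fun k => Fin.clamp (p + u k) N) ∈ (expand (pathG N) I).rel (Sum.inl ()) ↔
      u 1 = u 0 + 1 := by
  change (Fin.clamp (p + u 0) N).val + 1 = (Fin.clamp (p + u 1) N).val ↔ _
  have := hu 0
  have := hu 1
  simp only [Fin.clamp]
  omega

def CNF.symbols {σ : Sig} {n : ℕ} (φ : CNF σ n) : Set σ.symb :=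
  {s | ∃ c ∈ φ, ∃ l ∈ c, l.atom.sym = s}

instance CNF.finite_symbols {σ : Sig} {n : ℕ} (φ : CNF σ n) : Finite φ.symbols :=
  Set.Finite.to_subtype <| (φ.flatMap fun c => c.map fun l => l.atom.sym).finite_toSet.subset
    fun _ ⟨c, hc, l, hl, hs⟩ => List.mem_flatMap.mpr ⟨c, hc, List.mem_map.mpr ⟨l, hl, hs⟩⟩

theorem exists_windows_agree {σ : Sig} (S : Set σ.symb) [Finite S] (W : ℕ) :
    ∃ K, ∀ (B : Str σ) (f : ℕ → B.dom), ∃ a b, a < b ∧ b ≤ K ∧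
      ∀ s ∈ S, ∀ u : Fin (σ.ar s) → ℕ, (∀ k, u k < W) →
        ((fun k => f (a * W + u k)) ∈ B.rel s ↔ (fun k => f (b * W + u k)) ∈ B.rel s) := by
  refine ⟨Nat.card ((s : S) → Set (Fin (σ.ar s) → Fin W)), fun B f => ?_⟩
  let window (i : Fin (Nat.card ((s : S) → Set (Fin (σ.ar s) → Fin W)) + 1)) :
      (s : S) → Set (Fin (σ.ar s) → Fin W) :=
    fun s => {u | (fun k => f (i * W + u k)) ∈ B.rel s}
  obtain ⟨i, j, hij, hwindow⟩ : ∃ i j, i < j ∧ window i = window j := by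
    by_contra! hne
    have := Nat.card_le_card_of_injective window fun i j h => by
      rcases lt_trichotomy i j with hlt | heq | hgt
      · exact absurd h (hne i j hlt)
      · exact heq
      · exact absurd h.symm (hne j i hgt)
    simp at this
  refine ⟨i, j, hij, by omega, fun s hs u hu => ?_⟩
  exact Set.ext_iff.mp (congrFun hwindow ⟨s, hs⟩) fun k => ⟨u k, hu k⟩

theorem stmt13_general (ρ : Sig) (n : ℕ) (φ : CNF (Sig.sum DSig ρ) n)
    (hguard : ∀ c ∈ φ, ∀ l ∈ c, l.pos = true →
       ∃ l' ∈ c, l'.pos = false ∧ Lit.vars l ⊆ Lit.vars l')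
    (hpaths : ∀ N : ℕ, ∃ I, CNF.models φ (expand (pathG N) I)) :
    ∃ m : ℕ, ∃ I, CNF.models φ (expand (cycleG m) I) := by
  set W := 2 * n + 1 with hW
  obtain ⟨K, hK⟩ := exists_windows_agree φ.symbols W
  set N := (K + 1) * W with hN
  obtain ⟨I, hI⟩ := hpaths N
  obtain ⟨a, b, hab, hbK, hagree⟩ := hK (expand (pathG N) I) (Fin.clamp · N)
  have haW : (a + 1) * W ≤ b * W := Nat.mul_le_mul_right W hab
  have hbN : (b + 1) * W ≤ N := Nat.mul_le_mul_right W (by omega)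
  rw [add_one_mul] at haW hbN
  obtain ⟨m, hm⟩ : ∃ m, b * W = a * W + (m + 1) := ⟨b * W - a * W - 1, by omega⟩
  let f (y : ℕ) : (expand (pathG N) I).dom := Fin.clamp (a * W + y) N
  have hfold := CNF.models_fold (m := m) (A := 2) (W := W) hguard hI f (by omega) (by omega)
    fun c hc l hl u hu => by
      simpa only [f, hm, add_assoc, add_comm (u _)] using
        hagree _ ⟨c, hc, l, hl, rfl⟩ u hu
  have hcycle := expand_cycleG_eq_fold (m := m) (A := 2) (W := W) f le_rfl (by omega)
    fun u hu => clamp_mem_pathG_iff I u fun k => by have := hu k; omega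
  exact ⟨m, _, hcycle ▸ hfold⟩

theorem stmt13 (ρ : Sig) (n : ℕ) (φ : CNF (Sig.sum DSig ρ) n)
    (hheads : ∀ c ∈ φ, ∀ l ∈ c, l.pos = true → l.atom.sym.isRight)
    (hguard : ∀ c ∈ φ, ∀ l ∈ c, l.pos = true →
       ∃ l' ∈ c, l'.pos = false ∧ Lit.vars l ⊆ Lit.vars l')
    (hpaths : ∀ N : ℕ, ∃ I, CNF.models φ (expand (pathG N) I)) :
    ∃ m : ℕ, ∃ I, CNF.models φ (expand (cycleG m) I) :=
  stmt13_general ρ n φ hguard hpaths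
end

section
/- Under the hypotheses of the previous statement (φ an ASNP-shaped formula whose ρ-reduct models form an amalgamation class with Fraïssé limit B, and C the τ-structure defined on B from the implications of φ): if a finite τ-structure A has a (τ∪ρ)-expansion satisfying ∀x̄ φ, then A homomorphically maps to C. -/
def HasAP {σ : Sig} (C : Set (Str σ)) : Prop :=
  ∀ A B₁ B₂ : Str σ, A ∈ C → B₁ ∈ C → B₂ ∈ C →
    ∀ (f₁ : A.dom → B₁.dom) (f₂ : A.dom → B₂.dom), IsEmb A B₁ f₁ → IsEmb A B₂ f₂ →
      ∃ D ∈ C, ∃ (g₁ : B₁.dom → D.dom) (g₂ : B₂.dom → D.dom),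
        IsEmb B₁ D g₁ ∧ IsEmb B₂ D g₂ ∧ g₁ ∘ f₁ = g₂ ∘ f₂

def IsPartialIso {σ : Sig} (B : Str σ) (S : Set B.dom) (f : B.dom → B.dom) : Prop :=
  Set.InjOn f S ∧ ∀ (s : σ.symb) (t : Fin (σ.ar s) → B.dom), (∀ i, t i ∈ S) →
    (t ∈ B.rel s ↔ (f ∘ t) ∈ B.rel s)

def Homogeneous {σ : Sig} (B : Str σ) : Prop :=
  ∀ (S : Set B.dom) (f : B.dom → B.dom), S.Finite → IsPartialIso B S f →
    ∃ g : B.dom ≃ B.dom, IsEmb B B g ∧ ∀ x ∈ S, g x = f x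

inductive QF (σ : Sig) (n : ℕ) : Type where
  | rel (s : σ.symb) (args : Fin (σ.ar s) → Fin n)
  | eq (i j : Fin n)
  | not (φ : QF σ n)
  | and (φ ψ : QF σ n)
  | or (φ ψ : QF σ n)

def QF.eval {σ : Sig} {n : ℕ} (A : Str σ) (v : Fin n → A.dom) : QF σ n → Prop
  | .rel s args => (fun i => v (args i)) ∈ A.rel s
  | .eq i j => v i = v j
  | .not φ => ¬ QF.eval A v φ
  | .and φ ψ => QF.eval A v φ ∧ QF.eval A v ψ
  | .or φ ψ => QF.eval A v φ ∨ QF.eval A v ψ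

lemma emb_eval {σ : Sig} {A B : Str σ} {h : A.dom → B.dom} (he : IsEmb A B h)
    {n : ℕ} (φ : QF σ n) (v : Fin n → A.dom) :
    QF.eval A v φ ↔ QF.eval B (h ∘ v) φ := by
  induction φ with
  | rel s args => exact he.2 s (fun i => v (args i))
  | eq i j => exact ⟨fun e => congrArg h e, fun e => he.1 e⟩
  | not φ ih => exact not_congr ih
  | and φ ψ ih₁ ih₂ => exact and_congr ih₁ ih₂
  | or φ ψ ih₁ ih₂ => exact or_congr ih₁ ih₂

theorem stmt18 (τ ρ : Sig) (n₀ : ℕ) (Φρ : QF ρ n₀)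
    (ψs : ∀ S : τ.symb, List (QF ρ (τ.ar S)))
    (hAP : HasAP {A : Str ρ | Finite A.dom ∧ ∀ v, QF.eval A v Φρ})
    (B : Str ρ) (hcount : Countable B.dom) (hhomog : Homogeneous B)
    (hage : ∀ A : Str ρ, Finite A.dom → ((∀ v, QF.eval A v Φρ) ↔ EmbTo A B))
    (A : Str τ) (hAfin : Finite A.dom)
    (I : ∀ s : ρ.symb, Set ((Fin (ρ.ar s)) → A.dom))
    (hsat₁ : ∀ v, QF.eval (⟨A.dom, I⟩ : Str ρ) v Φρ)
    (hsat₂ : ∀ S, ∀ t ∈ A.rel S, ∀ ψi ∈ ψs S, QF.eval (⟨A.dom, I⟩ : Str ρ) t ψi) :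
    HomTo A ⟨B.dom, fun S => {t | ∀ ψi ∈ ψs S, QF.eval B t ψi}⟩ := by
  obtain ⟨h, hemb⟩ := (hage ⟨A.dom, I⟩ hAfin).mp hsat₁
  exact ⟨h, fun S t ht ψi hψ => (emb_eval hemb ψi t).mp (hsat₂ S t ht ψi hψ)⟩
end
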